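/- arXiv:2506.12761 — 4 statements merged into one kernel-verified Lean document; each statement's English description precedes it below -/
import Mathlib

section
/- Let z1, z2 be integers represented in two's complement with l bits, given as bit functions b1, b2 : Fin l → Bool (bit i is the coefficient of 2^i, with bit l-1 the sign bit). Define t2 by the fold: start with t2 := true, and for i = 0 to l-2 update t2 := if b1 i = b2 i then t2 else b2 i. Define r := if b1 (l-1) = b2 (l-1) then t2 else b1 (l-1). Then r = true if and only if z1 ≤ z2. -/
/-- Two's complement value of an `l`-bit string. -/
def twoC (l : ℕ) (h : 0 < l) (b : Fin l → Bool) : ℤ :=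
  (∑ i : Fin l, if (i : ℕ) < l - 1 then ((b i).toNat : ℤ) * 2 ^ (i : ℕ) else 0)
    - (if b ⟨l - 1, Nat.sub_lt h one_pos⟩ then 2 ^ (l - 1) else 0)

/-- The MUX-chain fold over the lower `l-1` bits, from least significant upward. -/
def muxFold (l : ℕ) (b1 b2 : Fin l → Bool) (init : Bool) : Bool :=
  (List.finRange l).foldl
    (fun t (i : Fin l) => if (i : ℕ) < l - 1 then (if b1 i = b2 i then t else b2 i) else t) init

/-!
Write each string as its unsigned lower part `x < 2 ^ (l-1)` minus the sign bit times `2 ^ (l-1)`.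
After processing bits `0, …, k-1` the MUX chain holds `x mod 2^k ≤ y mod 2^k`: a new bit
where the strings agree adds the same amount to both sides, while a new bit where they differ
outweighs all lower bits and decides the comparison in favour of the string having a `0` there.
The sign bits are handled the same way, except that a `1` there has negative weight,
so when they differ the string with the `1` is the smaller.
-/

namespace TwosComplement

def natVal (a : ℕ → Bool) (n : ℕ) : ℕ := ∑ i ∈ Finset.range n, (a i).toNat * 2 ^ i

lemma natVal_succ (a : ℕ → Bool) (n : ℕ) :
    natVal a (n + 1) = natVal a n + (a n).toNat * 2 ^ n :=
  Finset.sum_range_succ _ _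

lemma natVal_lt_two_pow (a : ℕ → Bool) (n : ℕ) : natVal a n < 2 ^ n := by
  induction n with
  | zero => simp [natVal]
  | succ n ih =>
    have := Bool.toNat_le (a n)
    rw [natVal_succ, pow_succ]
    nlinarith

def muxStep (a c : ℕ → Bool) (t : Bool) (i : ℕ) : Bool := if a i = c i then t else c i

lemma foldl_muxStep_range (a c : ℕ → Bool) (n : ℕ) :
    (List.range n).foldl (muxStep a c) true = decide (natVal a n ≤ natVal c n) := by
  induction n with
  | zero => simp [natVal]
  | succ n ih =>
    have ha := natVal_lt_two_pow a n
    have hc := natVal_lt_two_pow c n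
    rw [List.range_succ, List.foldl_append, ih, natVal_succ, natVal_succ]
    simp only [List.foldl_cons, List.foldl_nil, muxStep]
    cases a n <;> cases c n <;> simp <;> omega

lemma signed_le_iff {x y n : ℕ} (hx : x < 2 ^ n) (hy : y < 2 ^ n) (s₁ s₂ : Bool) :
    ((x : ℤ) - (if s₁ then 2 ^ n else 0) ≤ (y : ℤ) - (if s₂ then 2 ^ n else 0)) ↔
      (if s₁ = s₂ then decide (x ≤ y) else s₁) = true := by
  have hx' : (x : ℤ) < 2 ^ n := by exact_mod_cast hx
  have hy' : (y : ℤ) < 2 ^ n := by exact_mod_cast hy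
  cases s₁ <;> cases s₂ <;> simp <;> omega

def extendBits {l : ℕ} (b : Fin l → Bool) (j : ℕ) : Bool :=
  if h : j < l then b ⟨j, h⟩ else false

lemma extendBits_castSucc {n : ℕ} (b : Fin (n + 1) → Bool) (i : Fin n) :
    extendBits b i = b i.castSucc :=
  dif_pos (by omega)

lemma twoC_succ_eq (n : ℕ) (h : 0 < n + 1) (b : Fin (n + 1) → Bool) :
    twoC (n + 1) h b = natVal (extendBits b) n - if b (Fin.last n) then 2 ^ n else 0 := by
  rw [twoC, Fin.sum_univ_castSucc, natVal, Nat.cast_sum, ← Fin.sum_univ_eq_sum_range]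
  simp [extendBits_castSucc, Fin.last]

lemma muxFold_succ_eq (n : ℕ) (b₁ b₂ : Fin (n + 1) → Bool) (t : Bool) :
    muxFold (n + 1) b₁ b₂ t = (List.range n).foldl (muxStep (extendBits b₁) (extendBits b₂)) t := by
  rw [muxFold, ← List.map_coe_finRange_eq_range, List.foldl_map, List.finRange_succ_last,
    List.foldl_append, List.foldl_map]
  simp only [List.foldl_cons, List.foldl_nil, Fin.val_last, Nat.add_sub_cancel, lt_irrefl, if_false]
  congr 1
  funext t i
  simp [muxStep, extendBits_castSucc]

end TwosComplement

theorem stmt0 (l : ℕ) (h : 0 < l) (b1 b2 : Fin l → Bool)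
    (t2 : Bool) (ht2 : t2 = muxFold l b1 b2 true)
    (r : Bool)
    (hr : r = if b1 ⟨l - 1, Nat.sub_lt h one_pos⟩ = b2 ⟨l - 1, Nat.sub_lt h one_pos⟩
              then t2 else b1 ⟨l - 1, Nat.sub_lt h one_pos⟩) :
    r = true ↔ twoC l h b1 ≤ twoC l h b2 := by
  obtain ⟨n, rfl⟩ : ∃ n, l = n + 1 := ⟨l - 1, by omega⟩
  have hlast : (⟨n + 1 - 1, Nat.sub_lt h one_pos⟩ : Fin (n + 1)) = Fin.last n := rfl
  rw [hr, ht2, hlast, TwosComplement.muxFold_succ_eq, TwosComplement.foldl_muxStep_range,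
    TwosComplement.twoC_succ_eq, TwosComplement.twoC_succ_eq]
  exact (TwosComplement.signed_le_iff (TwosComplement.natVal_lt_two_pow _ n)
    (TwosComplement.natVal_lt_two_pow _ n) _ _).symm
end

section
/- Let z1, z2 be integers represented in two's complement with l bits via bit functions b1, b2 : Fin l → Bool. Define t2 by the fold: start with t2 := false, and for i = 0 to l-2 update t2 := if b1 i = b2 i then t2 else b2 i. Define r := if b1 (l-1) = b2 (l-1) then t2 else b1 (l-1). Then r = true if and only if z1 < z2. -/
def bval : List Bool → ℤ
  | [] => 0
  | a :: as => a.toNat + 2 * bval as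

lemma bval_nonneg : ∀ as : List Bool, 0 ≤ bval as
  | [] => le_refl 0
  | a :: as => by
      have := bval_nonneg as
      cases a <;> simp [bval] <;> omega

lemma bval_lt : ∀ as : List Bool, bval as < 2 ^ as.length
  | [] => by simp [bval]
  | a :: as => by
      have := bval_lt as
      cases a <;> simp [bval, pow_succ] <;> omega

lemma chain_iff : ∀ (ps : List (Bool × Bool)) (init : Bool),
    (ps.foldl (fun t p => if p.1 = p.2 then t else p.2) init = true ↔
      bval (ps.map Prod.fst) < bval (ps.map Prod.snd) ∨
        (bval (ps.map Prod.fst) = bval (ps.map Prod.snd) ∧ init = true))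
  | [], init => by simp [bval]
  | (a, b) :: ps, init => by
      have h1 := bval_nonneg (ps.map Prod.fst)
      have h2 := bval_nonneg (ps.map Prod.snd)
      have := chain_iff ps (if a = b then init else b)
      cases a <;> cases b <;> simp_all [bval] <;> omega

lemma bval_map_finRange : ∀ (n : ℕ) (f : Fin n → Bool),
    bval ((List.finRange n).map f) = ∑ i : Fin n, ((f i).toNat : ℤ) * 2 ^ (i : ℕ)
  | 0, f => by simp [bval]
  | n + 1, f => by
      rw [List.finRange_succ, List.map_cons, List.map_map]
      simp only [bval]
      rw [bval_map_finRange n (f ∘ Fin.succ), Fin.sum_univ_succ, Finset.mul_sum]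
      refine congrArg₂ _ (by simp) (Finset.sum_congr rfl fun i _ => ?_)
      simp only [Function.comp_apply, Fin.val_succ]
      ring

theorem stmt1 (l : ℕ) (h : 0 < l) (b1 b2 : Fin l → Bool)
    (t2 : Bool) (ht2 : t2 = muxFold l b1 b2 false)
    (r : Bool)
    (hr : r = if b1 ⟨l - 1, Nat.sub_lt h one_pos⟩ = b2 ⟨l - 1, Nat.sub_lt h one_pos⟩
              then t2 else b1 ⟨l - 1, Nat.sub_lt h one_pos⟩) :
    r = true ↔ twoC l h b1 < twoC l h b2 := by
  obtain ⟨m, rfl⟩ := Nat.exists_eq_succ_of_ne_zero h.ne'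
  have hidx : (⟨m + 1 - 1, Nat.sub_lt h one_pos⟩ : Fin (m + 1)) = Fin.last m := rfl
  -- sums
  have hsum : ∀ b : Fin (m + 1) → Bool,
      (∑ i : Fin (m + 1), if (i : ℕ) < m + 1 - 1 then ((b i).toNat : ℤ) * 2 ^ (i : ℕ) else 0)
        = ∑ i : Fin m, ((b i.castSucc).toNat : ℤ) * 2 ^ (i : ℕ) := by
    intro b
    rw [Fin.sum_univ_castSucc]
    simp [Fin.is_lt]
  -- mux fold as chain
  have hmux : muxFold (m + 1) b1 b2 false =
      ((List.finRange m).map (fun i => (b1 i.castSucc, b2 i.castSucc))).foldl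
        (fun t p => if p.1 = p.2 then t else p.2) false := by
    rw [muxFold, List.finRange_succ_last, List.foldl_append, List.foldl_map, List.foldl_map]
    simp [Fin.is_lt]
  have hchain := chain_iff ((List.finRange m).map (fun i => (b1 i.castSucc, b2 i.castSucc))) false
  rw [← hmux, ← ht2] at hchain
  rw [List.map_map, List.map_map] at hchain
  have e1 : bval ((List.finRange m).map (Prod.fst ∘ fun i => (b1 i.castSucc, b2 i.castSucc)))
      = ∑ i : Fin m, ((b1 i.castSucc).toNat : ℤ) * 2 ^ (i : ℕ) := bval_map_finRange m _
  have e2 : bval ((List.finRange m).map (Prod.snd ∘ fun i => (b1 i.castSucc, b2 i.castSucc)))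
      = ∑ i : Fin m, ((b2 i.castSucc).toNat : ℤ) * 2 ^ (i : ℕ) := bval_map_finRange m _
  rw [e1, e2] at hchain
  have hb1 : (0:ℤ) ≤ ∑ i : Fin m, ((b1 i.castSucc).toNat : ℤ) * 2 ^ (i : ℕ) := by
    positivity
  have hb2 : (0:ℤ) ≤ ∑ i : Fin m, ((b2 i.castSucc).toNat : ℤ) * 2 ^ (i : ℕ) := by
    positivity
  have hu1 : ∑ i : Fin m, ((b1 i.castSucc).toNat : ℤ) * 2 ^ (i : ℕ) < 2 ^ m := by
    have := bval_lt ((List.finRange m).map (Prod.fst ∘ fun i => (b1 i.castSucc, b2 i.castSucc)))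
    rw [e1] at this; simpa using this
  have hu2 : ∑ i : Fin m, ((b2 i.castSucc).toNat : ℤ) * 2 ^ (i : ℕ) < 2 ^ m := by
    have := bval_lt ((List.finRange m).map (Prod.snd ∘ fun i => (b1 i.castSucc, b2 i.castSucc)))
    rw [e2] at this; simpa using this
  rw [twoC, twoC, hsum b1, hsum b2]
  rw [hidx] at hr
  rw [hidx]
  rcases h1 : b1 (Fin.last m) <;> rcases h2 : b2 (Fin.last m) <;>
    rw [h1, h2] at hr <;> simp_all <;> omega
end

section
/- Parallel reduction correctness for associative commutative monoid operations: for a vector t : Fin l → Bool and the reduction pattern 'for k = 1, 2, 4, ..., while k < l: for each i ≡ 0 mod 2k with i + k < l, set t[i] := t[i] AND t[i+k]', the final value of t[0] equals the AND of all original entries t[0], ..., t[l-1]. -/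
/-!
After the rounds with strides `1, 2, …, 2 ^ (m - 1)`, every position `i` divisible by `2 ^ m`
holds the fold of the original entries over its block `[i, i + 2 ^ m)`, clipped at `l`: the
round with stride `2 ^ m` merges two adjacent such blocks, and it may only be skipped when the
second block lies past `l`. Since `l ≤ 2 ^ l`, after all `l` rounds the block of position `0`
is all of `[0, l)`.
-/

/-- One round of pairwise reduction with stride `k` and combining operation `op`. -/
def redStep (op : Bool → Bool → Bool) (l k : ℕ) (t : ℕ → Bool) : ℕ → Bool :=
  fun i => if i % (2 * k) = 0 ∧ i + k < l then op (t i) (t (i + k)) else t i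

/-- Run the rounds for k = 1, 2, 4, ... while k < l. -/
def redRun (op : Bool → Bool → Bool) (l : ℕ) (t : ℕ → Bool) : ℕ → Bool :=
  (List.range l).foldl (fun t j => if 2 ^ j < l then redStep op l (2 ^ j) t else t) t

lemma List.foldr_map_Ico_eq_op {α : Type*} {op : α → α → α} {e : α} [Std.Associative op]
    [Std.LawfulLeftIdentity op e] (f : ℕ → α) {i j k : ℕ} (hij : i ≤ j) (hjk : j ≤ k) :
    ((Ico i k).map f).foldr op e =
      op (((Ico i j).map f).foldr op e) (((Ico j k).map f).foldr op e) := by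
  rw [← Ico.append_consecutive hij hjk, map_append, foldr_append, ← foldr_assoc (op := op),
    Std.LawfulLeftIdentity.left_id (op := op)]

section Reduction

variable {op : Bool → Bool → Bool} {l : ℕ} {t : ℕ → Bool}

lemma redStep_apply_of_dvd {k i : ℕ} (hi : 2 * k ∣ i) (hik : i + k < l) :
    redStep op l k t i = op (t i) (t (i + k)) :=
  if_pos ⟨Nat.mod_eq_zero_of_dvd hi, hik⟩

lemma redStep_apply_of_le {k i : ℕ} (hik : l ≤ i + k) : redStep op l k t i = t i :=
  if_neg fun h => absurd h.2 (by omega)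

def redRounds (op : Bool → Bool → Bool) (l m : ℕ) (t : ℕ → Bool) : ℕ → Bool :=
  (List.range m).foldl (fun t j => if 2 ^ j < l then redStep op l (2 ^ j) t else t) t

lemma redRun_eq_redRounds : redRun op l t = redRounds op l l t := rfl

lemma redRounds_succ (m : ℕ) :
    redRounds op l (m + 1) t =
      if 2 ^ m < l then redStep op l (2 ^ m) (redRounds op l m t) else redRounds op l m t := by
  simp only [redRounds, List.range_succ, List.foldl_append, List.foldl_cons, List.foldl_nil]

theorem redRounds_apply_of_dvd {e : Bool} [Std.Associative op] [Std.LawfulIdentity op e]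
    (m : ℕ) {i : ℕ} (hi : 2 ^ m ∣ i) (hil : i < l) :
    redRounds op l m t i = ((List.Ico i (min (i + 2 ^ m) l)).map t).foldr op e := by
  induction m generalizing i with
  | zero =>
    rw [pow_zero, min_eq_left hil, List.Ico.succ_singleton]
    exact (Std.LawfulRightIdentity.right_id (t i)).symm
  | succ m ih =>
    have hi' : 2 ^ m ∣ i := (pow_dvd_pow 2 m.le_succ).trans hi
    rw [redRounds_succ]
    by_cases hik : i + 2 ^ m < l
    · rw [if_pos (by omega), redStep_apply_of_dvd (by rwa [← pow_succ']) hik, ih hi' hil,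
        ih (dvd_add hi' dvd_rfl) hik, min_eq_left hik.le, add_assoc, ← two_mul, ← pow_succ']
      exact (List.foldr_map_Ico_eq_op t (j := i + 2 ^ m) (by omega) (by omega)).symm
    · have hclip : min (i + 2 ^ (m + 1)) l = min (i + 2 ^ m) l := by rw [pow_succ]; omega
      rw [hclip, ← ih hi' hil]
      split_ifs
      · exact redStep_apply_of_le (by omega)
      · rfl

end Reduction

theorem stmt14 (l : ℕ) (hl : 0 < l) (t : ℕ → Bool) :
    redRun (· && ·) l t 0 = ((List.range l).map t).foldr (· && ·) true := by
  rw [redRun_eq_redRounds, redRounds_apply_of_dvd l (dvd_zero _) hl, zero_add,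
    min_eq_right Nat.lt_two_pow_self.le, List.Ico.zero_bot]
end

section
/- Unsigned MUX-chain comparison: let u1, u2 : Fin m → Bool with unsigned values U1 = Σ u1[i]·2^i and U2 = Σ u2[i]·2^i. Define the fold: r := c0 (a Boolean constant), and for i = 0 to m-1, r := if u1 i = u2 i then r else u2 i. Then the final r = true iff (U1 < U2) or (U1 = U2 and c0 = true). -/
lemma bits_lt (m : ℕ) (b : Fin m → Bool) :
    ∑ i : Fin m, (b i).toNat * 2 ^ (i : ℕ) < 2 ^ m := by
  induction m with
  | zero => simp
  | succ n ih =>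
    rw [Fin.sum_univ_castSucc]
    have h1 := ih (fun i => b i.castSucc)
    have h2 : (b (Fin.last n)).toNat * 2 ^ n ≤ 2 ^ n := by
      cases b (Fin.last n) <;> simp
    simp only [Fin.coe_castSucc, Fin.val_last] at *
    calc _ < 2 ^ n + 2 ^ n := by omega
    _ = 2 ^ (n + 1) := by ring

lemma aux (m : ℕ) (u1 u2 : Fin m → Bool) (c0 : Bool) :
    ((List.finRange m).foldl (fun r i => if u1 i = u2 i then r else u2 i) c0 = true) ↔
    ((∑ i : Fin m, (u1 i).toNat * 2 ^ (i : ℕ)) < (∑ i : Fin m, (u2 i).toNat * 2 ^ (i : ℕ)) ∨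
      ((∑ i : Fin m, (u1 i).toNat * 2 ^ (i : ℕ)) = (∑ i : Fin m, (u2 i).toNat * 2 ^ (i : ℕ)) ∧
        c0 = true)) := by
  induction m with
  | zero => simp
  | succ n ih =>
    rw [List.finRange_succ_last, List.foldl_append, List.foldl_map,
      Fin.sum_univ_castSucc, Fin.sum_univ_castSucc]
    simp only [List.foldl_cons, List.foldl_nil]
    set a := ∑ i : Fin n, (u1 i.castSucc).toNat * 2 ^ (i : ℕ) with ha
    set b := ∑ i : Fin n, (u2 i.castSucc).toNat * 2 ^ (i : ℕ) with hb
    have hla : a < 2 ^ n := bits_lt n _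
    have hlb : b < 2 ^ n := bits_lt n _
    simp only [Fin.coe_castSucc, Fin.val_last]
    by_cases h : u1 (Fin.last n) = u2 (Fin.last n)
    · rw [if_pos h, ih (fun i => u1 i.castSucc) (fun i => u2 i.castSucc), h]
      cases u2 (Fin.last n) <;> simp <;> omega
    · rw [if_neg h]
      cases h2 : u2 (Fin.last n)
      · have h1 : u1 (Fin.last n) = true := by
          cases h1 : u1 (Fin.last n) <;> simp_all
        rw [h1]
        simp only [Bool.toNat_true, Bool.toNat_false, one_mul, zero_mul, add_zero]
        constructor
        · simp
        · intro hc; omega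
      · have h1 : u1 (Fin.last n) = false := by
          cases h1 : u1 (Fin.last n) <;> simp_all
        rw [h1]
        simp only [Bool.toNat_true, Bool.toNat_false, one_mul, zero_mul, add_zero]
        constructor
        · intro; left; omega
        · simp

theorem stmt18 (m : ℕ) (u1 u2 : Fin m → Bool) (c0 : Bool)
    (U1 U2 : ℕ)
    (hU1 : U1 = ∑ i : Fin m, (u1 i).toNat * 2 ^ (i : ℕ))
    (hU2 : U2 = ∑ i : Fin m, (u2 i).toNat * 2 ^ (i : ℕ))
    (r : Bool)
    (hr : r = (List.finRange m).foldl (fun r i => if u1 i = u2 i then r else u2 i) c0) :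
    r = true ↔ (U1 < U2 ∨ (U1 = U2 ∧ c0 = true)) := by
  subst hU1 hU2 hr
  exact aux m u1 u2 c0
end
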